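/- arXiv:1505.07258 — 4 statements merged into one kernel-verified Lean document; each statement's English description precedes it below -/
import Mathlib

section
/- Let A be a twisted R-algebra, J ⊆ A an ideal with σ_A(J) ⊆ J, and B := A/J the induced twisted quotient (with σ_B induced by σ_A). Then the induced homomorphism Φ := φ ⊗ φ : P_A → P_B (where φ : A → B is the quotient map) is surjective, Φ maps σ_{P_A}^n(I_A) onto a generating set of σ_{P_B}^n(I_B) (i.e. σ_{P_B}^n(I_B) is the ideal generated by Φ(σ_{P_A}^n(I_A))), Φ(I_A^{(n)}) generates I_B^{(n)}, and the induced ring homomorphism P_{A,(n)} → P_{B,(n)} is surjective for every n ∈ ℕ. -/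
open TensorProduct

/-- The augmentation ideal `I_A ⊆ P_A = A ⊗[R] A`: the kernel of the
multiplication map `a ⊗ b ↦ a * b`. -/
noncomputable def diagIdeal (R A : Type*) [CommRing R] [CommRing A] [Algebra R A] :
    Ideal (A ⊗[R] A) :=
  RingHom.ker (Algebra.TensorProduct.lmul' R (S := A))

/-- The endomorphism `σ = σ_A ⊗ id` of `P_A = A ⊗[R] A`. -/
noncomputable def sigmaP (R A : Type*) [CommRing R] [CommRing A] [Algebra R A]
    (σ : A →ₐ[R] A) : A ⊗[R] A →ₐ[R] A ⊗[R] A :=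
  Algebra.TensorProduct.map σ (AlgHom.id R A)

/-- The iterates `σ^n` of `σ = σ_A ⊗ id` on `P_A`. -/
noncomputable def sigmaPow (R A : Type*) [CommRing R] [CommRing A] [Algebra R A]
    (σ : A →ₐ[R] A) : ℕ → (A ⊗[R] A →ₐ[R] A ⊗[R] A)
  | 0 => AlgHom.id R _
  | n + 1 => (sigmaP R A σ).comp (sigmaPow R A σ n)

/-- The twisted powers `I_A^{(n)} = I_A · σ(I_A) ⋯ σ^{n-1}(I_A)` (with `I_A^{(0)} = P_A`). -/
noncomputable def twistedPow (R A : Type*) [CommRing R] [CommRing A] [Algebra R A]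
    (σ : A →ₐ[R] A) : ℕ → Ideal (A ⊗[R] A)
  | 0 => ⊤
  | n + 1 => twistedPow R A σ n * Ideal.map (sigmaPow R A σ n) (diagIdeal R A)

/-!
Everything holds for an arbitrary surjective morphism `f : A → B` of twisted algebras.
The diagonal ideal `I_A` is generated by the elements `1 ⊗ a - a ⊗ 1`, and `f ⊗ f` maps these
onto the generators `1 ⊗ b - b ⊗ 1` of `I_B`. Since `f ⊗ f` intertwines the twists, it then
carries each `σ^n(I_A)` onto generators of `σ^n(I_B)`, and, as the image of a product of
ideals is the product of the images, `I_A^{(n)}` onto generators of `I_B^{(n)}`.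
-/

open Algebra.TensorProduct (map)

section TwistedMorphism

variable {R A B : Type*} [CommRing R] [CommRing A] [CommRing B] [Algebra R A] [Algebra R B]
  {f : A →ₐ[R] B}

theorem map_diagIdeal_of_surjective (hf : Function.Surjective f) :
    (diagIdeal R A).map (map f f) = diagIdeal R B := by
  change (KaehlerDifferential.ideal R A).map (map f f) = KaehlerDifferential.ideal R B
  rw [← KaehlerDifferential.span_range_eq_ideal, ← KaehlerDifferential.span_range_eq_ideal,
    Ideal.map_span, ← Set.range_comp]
  have hgen : (map f f ∘ fun a : A => (1 : A) ⊗ₜ[R] a - a ⊗ₜ[R] (1 : A)) =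
      (fun b : B => (1 : B) ⊗ₜ[R] b - b ⊗ₜ[R] (1 : B)) ∘ f := by
    ext a
    simp
  rw [hgen, hf.range_comp]

variable {σA : A →ₐ[R] A} {σB : B →ₐ[R] B}

theorem map_comp_sigmaP (hσ : σB.comp f = f.comp σA) :
    (map f f).comp (sigmaP R A σA) = (sigmaP R B σB).comp (map f f) := by
  rw [sigmaP, sigmaP, ← Algebra.TensorProduct.map_comp, ← Algebra.TensorProduct.map_comp, hσ,
    AlgHom.comp_id, AlgHom.id_comp]

theorem map_comp_sigmaPow (hσ : σB.comp f = f.comp σA) (n : ℕ) :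
    (map f f).comp (sigmaPow R A σA n) = (sigmaPow R B σB n).comp (map f f) := by
  induction n with
  | zero => rfl
  | succ n ih =>
    rw [sigmaPow, sigmaPow, ← AlgHom.comp_assoc, map_comp_sigmaP hσ, AlgHom.comp_assoc, ih,
      AlgHom.comp_assoc]

theorem map_sigmaPow_diagIdeal (hf : Function.Surjective f) (hσ : σB.comp f = f.comp σA)
    (n : ℕ) :
    ((diagIdeal R A).map (sigmaPow R A σA n)).map (map f f) =
      (diagIdeal R B).map (sigmaPow R B σB n) := by
  rw [Ideal.map_mapₐ, map_comp_sigmaPow hσ, ← Ideal.map_mapₐ, map_diagIdeal_of_surjective hf]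

theorem map_twistedPow (hf : Function.Surjective f) (hσ : σB.comp f = f.comp σA) (n : ℕ) :
    (twistedPow R A σA n).map (map f f) = twistedPow R B σB n := by
  induction n with
  | zero => exact Ideal.map_top _
  | succ n ih => rw [twistedPow, twistedPow, Ideal.map_mul, ih, map_sigmaPow_diagIdeal hf hσ]

end TwistedMorphism

theorem stmt2_general (R A : Type*) [CommRing R] [CommRing A] [Algebra R A]
    (σA : A →ₐ[R] A) (J : Ideal A)
    (σB : A ⧸ J →ₐ[R] A ⧸ J)
    (hσB : σB.comp (Ideal.Quotient.mkₐ R J) = (Ideal.Quotient.mkₐ R J).comp σA) :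
    Function.Surjective
        (Algebra.TensorProduct.map (Ideal.Quotient.mkₐ R J) (Ideal.Quotient.mkₐ R J)) ∧
      (∀ n : ℕ,
        Ideal.map (sigmaPow R (A ⧸ J) σB n) (diagIdeal R (A ⧸ J)) =
          Ideal.map (Algebra.TensorProduct.map (Ideal.Quotient.mkₐ R J) (Ideal.Quotient.mkₐ R J))
            (Ideal.map (sigmaPow R A σA n) (diagIdeal R A))) ∧
      (∀ n : ℕ,
        twistedPow R (A ⧸ J) σB n =
          Ideal.map (Algebra.TensorProduct.map (Ideal.Quotient.mkₐ R J) (Ideal.Quotient.mkₐ R J))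
            (twistedPow R A σA n)) ∧
      (∀ n : ℕ,
        ∀ ψ : (A ⊗[R] A) ⧸ twistedPow R A σA (n + 1) →+*
            ((A ⧸ J) ⊗[R] (A ⧸ J)) ⧸ twistedPow R (A ⧸ J) σB (n + 1),
          ψ.comp (Ideal.Quotient.mk (twistedPow R A σA (n + 1))) =
            (Ideal.Quotient.mk (twistedPow R (A ⧸ J) σB (n + 1))).comp
              (Algebra.TensorProduct.map (Ideal.Quotient.mkₐ R J)
                (Ideal.Quotient.mkₐ R J)).toRingHom →
          Function.Surjective ψ) := by
  have hφ : Function.Surjective (Ideal.Quotient.mkₐ R J) := Ideal.Quotient.mkₐ_surjective R J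
  have hΦ := Algebra.TensorProduct.map_surjective _ _ hφ hφ
  refine ⟨hΦ, fun n => (map_sigmaPow_diagIdeal hφ hσB n).symm,
    fun n => (map_twistedPow hφ hσB n).symm, fun n ψ hψ => ?_⟩
  have hcomp : Function.Surjective (ψ.comp (Ideal.Quotient.mk _)) := by
    rw [hψ]
    exact Ideal.Quotient.mk_surjective.comp hΦ
  exact Function.Surjective.of_comp hcomp

/-- For a twisted quotient `B = A/J` (where `σ_A(J) ⊆ J` and `σ_B` is induced by `σ_A`),
the induced homomorphism `Φ = φ ⊗ φ : P_A → P_B` is surjective, it maps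
`σ^n(I_A)` onto a generating set of `σ^n(I_B)`, `Φ(I_A^{(n)})` generates `I_B^{(n)}`,
and the induced ring homomorphism `P_{A,(n)} → P_{B,(n)}` is surjective for every `n`. -/
theorem stmt2 (R A : Type*) [CommRing R] [CommRing A] [Algebra R A]
    (σA : A →ₐ[R] A) (J : Ideal A) (hJ : ∀ a ∈ J, σA a ∈ J)
    (σB : A ⧸ J →ₐ[R] A ⧸ J)
    (hσB : σB.comp (Ideal.Quotient.mkₐ R J) = (Ideal.Quotient.mkₐ R J).comp σA) :
    Function.Surjective
        (Algebra.TensorProduct.map (Ideal.Quotient.mkₐ R J) (Ideal.Quotient.mkₐ R J)) ∧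
      (∀ n : ℕ,
        Ideal.map (sigmaPow R (A ⧸ J) σB n) (diagIdeal R (A ⧸ J)) =
          Ideal.map (Algebra.TensorProduct.map (Ideal.Quotient.mkₐ R J) (Ideal.Quotient.mkₐ R J))
            (Ideal.map (sigmaPow R A σA n) (diagIdeal R A))) ∧
      (∀ n : ℕ,
        twistedPow R (A ⧸ J) σB n =
          Ideal.map (Algebra.TensorProduct.map (Ideal.Quotient.mkₐ R J) (Ideal.Quotient.mkₐ R J))
            (twistedPow R A σA n)) ∧
      (∀ n : ℕ,
        ∀ ψ : (A ⊗[R] A) ⧸ twistedPow R A σA (n + 1) →+*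
            ((A ⧸ J) ⊗[R] (A ⧸ J)) ⧸ twistedPow R (A ⧸ J) σB (n + 1),
          ψ.comp (Ideal.Quotient.mk (twistedPow R A σA (n + 1))) =
            (Ideal.Quotient.mk (twistedPow R (A ⧸ J) σB (n + 1))).comp
              (Algebra.TensorProduct.map (Ideal.Quotient.mkₐ R J)
                (Ideal.Quotient.mkₐ R J)).toRingHom →
          Function.Surjective ψ) :=
  stmt2_general R A σA J σB hσB
end

section
/- Let A be a twisted R-algebra, S ⊆ A a multiplicative submonoid, and B := S^{-1}A the localization; assume that every element of σ_A(S) becomes a unit in B, so that σ_A induces an endomorphism σ_B of B with σ_B ∘ φ = φ ∘ σ_A, where φ : A → B is the localization map (B is then a twisted localization of A). Then P_B = B ⊗_R B is the localization of P_A = A ⊗_R A at the multiplicative submonoid S' of P_A generated by the elements s ⊗ 1 and 1 ⊗ s for s ∈ S. -/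
open TensorProduct

/-! Localize one tensor factor at a time: base change of a localization is a localization, and
localizing `M₁⁻¹R` further at the image of `M₂` is localizing `R` at `M₁ ⊔ M₂`. -/

namespace IsLocalization

theorem localization_localization_isLocalization_sup {R S T : Type*} [CommSemiring R]
    [CommSemiring S] [CommSemiring T] [Algebra R S] [Algebra S T] [Algebra R T]
    [IsScalarTower R S T] (M₁ M₂ : Submonoid R) [IsLocalization M₁ S]
    [IsLocalization (Algebra.algebraMapSubmonoid S M₂) T] :
    IsLocalization (M₁ ⊔ M₂) T := by
  set N := localizationLocalizationSubmodule M₁ (Algebra.algebraMapSubmonoid S M₂)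
  have hle : M₁ ⊔ M₂ ≤ N := sup_le
    (fun m hm ↦ mem_localizationLocalizationSubmodule.mpr
      ⟨1, ⟨m, hm⟩, by rw [OneMemClass.coe_one, one_mul]⟩)
    (fun m hm ↦ mem_localizationLocalizationSubmodule.mpr
      ⟨⟨algebraMap R S m, m, hm, rfl⟩, 1, by rw [OneMemClass.coe_one, map_one, mul_one]⟩)
  have hdvd : ∀ n ∈ N, ∃ m ∈ M₁ ⊔ M₂, n ∣ m := by
    intro n hn
    obtain ⟨⟨-, m₂, hm₂, rfl⟩, m₁, e⟩ := mem_localizationLocalizationSubmodule.mp hn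
    rw [← map_mul, eq_iff_exists M₁] at e
    obtain ⟨c, hc⟩ := e
    exact ⟨c * (m₂ * m₁), mul_mem (Submonoid.mem_sup_left c.2)
      (mul_mem (Submonoid.mem_sup_right hm₂) (Submonoid.mem_sup_left m₁.2)),
      hc ▸ dvd_mul_left n c⟩
  rw [iff_of_le_of_exists_dvd _ _ hle hdvd]
  exact localization_localization_isLocalization M₁ _ T

theorem tensorProduct_map {R A₁ A₂ B₁ B₂ : Type*} [CommSemiring R]
    [CommSemiring A₁] [Algebra R A₁] [CommSemiring B₁] [Algebra R B₁] [Algebra A₁ B₁]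
    [IsScalarTower R A₁ B₁]
    [CommSemiring A₂] [Algebra R A₂] [CommSemiring B₂] [Algebra R B₂] [Algebra A₂ B₂]
    [IsScalarTower R A₂ B₂]
    (S₁ : Submonoid A₁) (S₂ : Submonoid A₂) [IsLocalization S₁ B₁] [IsLocalization S₂ B₂]
    [Algebra (A₁ ⊗[R] A₂) (B₁ ⊗[R] B₂)]
    (h : algebraMap (A₁ ⊗[R] A₂) (B₁ ⊗[R] B₂) =
      (Algebra.TensorProduct.map (IsScalarTower.toAlgHom R A₁ B₁)
        (IsScalarTower.toAlgHom R A₂ B₂)).toRingHom) :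
    IsLocalization
      (S₁.map (Algebra.TensorProduct.includeLeft : A₁ →ₐ[R] A₁ ⊗[R] A₂) ⊔
        S₂.map (Algebra.TensorProduct.includeRight : A₂ →ₐ[R] A₁ ⊗[R] A₂))
      (B₁ ⊗[R] B₂) := by
  let φ₁ := IsScalarTower.toAlgHom R A₁ B₁
  let φ₂ := IsScalarTower.toAlgHom R A₂ B₂
  let : Algebra (A₁ ⊗[R] A₂) (B₁ ⊗[R] A₂) :=
    (Algebra.TensorProduct.map φ₁ (AlgHom.id R A₂)).toRingHom.toAlgebra
  let : Algebra (B₁ ⊗[R] A₂) (B₁ ⊗[R] B₂) :=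
    (Algebra.TensorProduct.map (AlgHom.id R B₁) φ₂).toRingHom.toAlgebra
  have : IsScalarTower A₁ (A₁ ⊗[R] A₂) (B₁ ⊗[R] A₂) :=
    .of_algebraMap_eq fun a ↦ by simp [RingHom.algebraMap_toAlgebra, φ₁]
  have : IsScalarTower B₁ (B₁ ⊗[R] A₂) (B₁ ⊗[R] B₂) :=
    .of_algebraMap_eq fun b ↦ by simp [RingHom.algebraMap_toAlgebra]
  have : IsScalarTower (A₁ ⊗[R] A₂) (B₁ ⊗[R] A₂) (B₁ ⊗[R] B₂) :=
    .of_algebraMap_eq fun x ↦ by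
      rw [h, RingHom.algebraMap_toAlgebra, RingHom.algebraMap_toAlgebra]
      change _ = ((Algebra.TensorProduct.map (AlgHom.id R B₁) φ₂).comp
        (Algebra.TensorProduct.map φ₁ (AlgHom.id R A₂))) x
      rw [← Algebra.TensorProduct.map_comp]
      rfl
  have : IsLocalization (S₁.map (Algebra.TensorProduct.includeLeft : A₁ →ₐ[R] A₁ ⊗[R] A₂))
      (B₁ ⊗[R] A₂) :=
    tensorProduct_tensorProduct R A₂ S₁ B₁ (by ext; simp [RingHom.algebraMap_toAlgebra])
  have : IsLocalization (S₂.map (Algebra.TensorProduct.includeRight : A₂ →ₐ[R] B₁ ⊗[R] A₂))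
      (B₁ ⊗[R] B₂) :=
    tensorProduct_tensorProduct_right R B₁ S₂ B₂ (by ext; simp [RingHom.algebraMap_toAlgebra, φ₂])
  have hmap : Algebra.algebraMapSubmonoid (B₁ ⊗[R] A₂)
      (S₂.map (Algebra.TensorProduct.includeRight : A₂ →ₐ[R] A₁ ⊗[R] A₂)) =
      S₂.map (Algebra.TensorProduct.includeRight : A₂ →ₐ[R] B₁ ⊗[R] A₂) := by
    ext
    simp [Algebra.algebraMapSubmonoid, RingHom.algebraMap_toAlgebra]
  have : IsLocalization (Algebra.algebraMapSubmonoid (B₁ ⊗[R] A₂)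
      (S₂.map (Algebra.TensorProduct.includeRight : A₂ →ₐ[R] A₁ ⊗[R] A₂))) (B₁ ⊗[R] B₂) :=
    hmap ▸ this
  exact localization_localization_isLocalization_sup (S := B₁ ⊗[R] A₂) _ _

end IsLocalization

theorem stmt4_general (R A B : Type*) [CommRing R] [CommRing A] [Algebra R A]
    [CommRing B] [Algebra R B] [Algebra A B] [IsScalarTower R A B]
    (S : Submonoid A) [IsLocalization S B]
    [alg : Algebra (A ⊗[R] A) (B ⊗[R] B)]
    (halg : algebraMap (A ⊗[R] A) (B ⊗[R] B) =
      (Algebra.TensorProduct.map (IsScalarTower.toAlgHom R A B)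
        (IsScalarTower.toAlgHom R A B)).toRingHom) :
    IsLocalization
      (Submonoid.map (Algebra.TensorProduct.includeLeft : A →ₐ[R] A ⊗[R] A) S ⊔
        Submonoid.map (Algebra.TensorProduct.includeRight : A →ₐ[R] A ⊗[R] A) S)
      (B ⊗[R] B) :=
  IsLocalization.tensorProduct_map S S halg

/-- For a twisted localization `B = S⁻¹A` of a twisted `R`-algebra `A`,
`P_B = B ⊗_R B` is the localization of `P_A = A ⊗_R A` at the multiplicative
submonoid `S'` generated by the elements `s ⊗ 1` and `1 ⊗ s` for `s ∈ S`. -/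
theorem stmt4 (R A B : Type*) [CommRing R] [CommRing A] [Algebra R A]
    [CommRing B] [Algebra R B] [Algebra A B] [IsScalarTower R A B]
    (S : Submonoid A) [IsLocalization S B]
    (σA : A →ₐ[R] A) (hS : ∀ s ∈ S, IsUnit (algebraMap A B (σA s)))
    (σB : B →ₐ[R] B)
    (hσB : σB.comp (IsScalarTower.toAlgHom R A B) = (IsScalarTower.toAlgHom R A B).comp σA)
    [alg : Algebra (A ⊗[R] A) (B ⊗[R] B)]
    (halg : algebraMap (A ⊗[R] A) (B ⊗[R] B) =
      (Algebra.TensorProduct.map (IsScalarTower.toAlgHom R A B)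
        (IsScalarTower.toAlgHom R A B)).toRingHom) :
    IsLocalization
      (Submonoid.map (Algebra.TensorProduct.includeLeft : A →ₐ[R] A ⊗[R] A) S ⊔
        Submonoid.map (Algebra.TensorProduct.includeRight : A →ₐ[R] A ⊗[R] A) S)
      (B ⊗[R] B) :=
  stmt4_general R A B S (alg := alg) halg
end

section
/- Let A be a twisted R-algebra and B := S^{-1}A a twisted localization of A, with localization map φ : A → B and induced map Φ := φ ⊗ φ : P_A → P_B. Then I_B is the extension of I_A along Φ (i.e. I_B = I_A · P_B, equivalently I_B = P_B ⊗_{P_A} I_A), and for every n ∈ ℕ one has σ_{P_B}^n(I_B) · P_B = σ_{P_A}^n(I_A) · P_B and I_B^{(n)} = I_A^{(n)} · P_B, i.e. the twisted powers of I_B are the extensions of the twisted powers of I_A. -/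
/-!
Since `B = S⁻¹A`, every `b ∈ B` is `a / s`, and `(s ⊗ s)(1 ⊗ b - b ⊗ 1) = Φ(s ⊗ a - a ⊗ s)` with
`s ⊗ s` a unit of `P_B`; as the `1 ⊗ b - b ⊗ 1` generate `I_B`, this gives `I_B = I_A · P_B`.
The compatibility `σ_B ∘ φ = φ ∘ σ_A` makes `Φ` commute with all `σ^n`, so extension along `Φ`
commutes with taking `σ^n`-images, and then with the products defining the twisted powers.
-/

open TensorProduct

section

variable {R A B : Type*} [CommRing R] [CommRing A] [Algebra R A] [CommRing B] [Algebra R B]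

theorem lmul'_comp_map_self (f : A →ₐ[R] B) :
    (Algebra.TensorProduct.lmul' R).comp (Algebra.TensorProduct.map f f) =
      f.comp (Algebra.TensorProduct.lmul' R) := by
  ext <;> simp

theorem map_diagIdeal_le (f : A →ₐ[R] B) :
    (diagIdeal R A).map (Algebra.TensorProduct.map f f) ≤ diagIdeal R B := by
  rw [Ideal.map_le_iff_le_comap]
  intro x (hx : Algebra.TensorProduct.lmul' R x = 0)
  change Algebra.TensorProduct.lmul' R (Algebra.TensorProduct.map f f x) = 0
  rw [← AlgHom.comp_apply, lmul'_comp_map_self, AlgHom.comp_apply, hx, map_zero]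

theorem diagIdeal_eq_map_of_isLocalization [Algebra A B] [IsScalarTower R A B]
    (S : Submonoid A) [IsLocalization S B] :
    diagIdeal R B =
      (diagIdeal R A).map (Algebra.TensorProduct.map (IsScalarTower.toAlgHom R A B)
        (IsScalarTower.toAlgHom R A B)) := by
  refine le_antisymm ?_ (map_diagIdeal_le _)
  rw [show diagIdeal R B = KaehlerDifferential.ideal R B from rfl,
    ← KaehlerDifferential.span_range_eq_ideal, Ideal.span_le]
  rintro _ ⟨b, rfl⟩
  obtain ⟨⟨a, s⟩, hb⟩ := IsLocalization.surj S b
  have hs : IsUnit (algebraMap A B s) := IsLocalization.map_units B s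
  have hss : IsUnit (algebraMap A B s ⊗ₜ[R] algebraMap A B s) := by
    simpa using (hs.map (Algebra.TensorProduct.includeLeft (R := R) (S := R) (A := B))).mul
      (hs.map (Algebra.TensorProduct.includeRight (R := R) (A := B)))
  have key : algebraMap A B s ⊗ₜ[R] algebraMap A B s * ((1 : B) ⊗ₜ[R] b - b ⊗ₜ[R] 1) =
      Algebra.TensorProduct.map (IsScalarTower.toAlgHom R A B) (IsScalarTower.toAlgHom R A B)
        ((s : A) ⊗ₜ[R] a - a ⊗ₜ[R] (s : A)) := by
    simp only [mul_sub, Algebra.TensorProduct.tmul_mul_tmul, mul_one, map_sub,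
      Algebra.TensorProduct.map_tmul, IsScalarTower.coe_toAlgHom', mul_comm _ b, hb]
  rw [SetLike.mem_coe, ← Ideal.unit_mul_mem_iff_mem _ hss, key]
  refine Ideal.mem_map_of_mem _ ?_
  simp [diagIdeal, RingHom.mem_ker, mul_comm]

variable {σA : A →ₐ[R] A} {σB : B →ₐ[R] B} {f : A →ₐ[R] B}

theorem sigmaP_comp_map_self (hf : σB.comp f = f.comp σA) :
    (sigmaP R B σB).comp (Algebra.TensorProduct.map f f) =
      (Algebra.TensorProduct.map f f).comp (sigmaP R A σA) := by
  ext a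
  · simp [sigmaP, ← AlgHom.comp_apply σB f, hf]
  · simp [sigmaP]

theorem sigmaPow_comp_map_self (hf : σB.comp f = f.comp σA) (n : ℕ) :
    (sigmaPow R B σB n).comp (Algebra.TensorProduct.map f f) =
      (Algebra.TensorProduct.map f f).comp (sigmaPow R A σA n) := by
  induction n with
  | zero => rfl
  | succ n ih =>
    simp only [sigmaPow]
    rw [AlgHom.comp_assoc, ih, ← AlgHom.comp_assoc, sigmaP_comp_map_self hf, AlgHom.comp_assoc]

theorem map_sigmaPow_map_self (hf : σB.comp f = f.comp σA) (n : ℕ) (I : Ideal (A ⊗[R] A)) :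
    (I.map (Algebra.TensorProduct.map f f)).map (sigmaPow R B σB n) =
      (I.map (sigmaPow R A σA n)).map (Algebra.TensorProduct.map f f) := by
  rw [Ideal.map_mapₐ, Ideal.map_mapₐ, sigmaPow_comp_map_self hf]

theorem twistedPow_eq_map_of_diagIdeal_eq_map (hf : σB.comp f = f.comp σA)
    (hdiag : diagIdeal R B = (diagIdeal R A).map (Algebra.TensorProduct.map f f)) (n : ℕ) :
    twistedPow R B σB n = (twistedPow R A σA n).map (Algebra.TensorProduct.map f f) := by
  induction n with
  | zero => exact (Ideal.map_top _).symm
  | succ n ih =>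
    simp only [twistedPow]
    rw [ih, hdiag, map_sigmaPow_map_self hf, Ideal.map_mul]

end

theorem stmt5_general (R A B : Type*) [CommRing R] [CommRing A] [Algebra R A]
    [CommRing B] [Algebra R B] [Algebra A B] [IsScalarTower R A B]
    (S : Submonoid A) [IsLocalization S B]
    (σA : A →ₐ[R] A)
    (σB : B →ₐ[R] B)
    (hσB : σB.comp (IsScalarTower.toAlgHom R A B) =
      (IsScalarTower.toAlgHom R A B).comp σA) :
    diagIdeal R B =
        Ideal.map
          (Algebra.TensorProduct.map (IsScalarTower.toAlgHom R A B)
            (IsScalarTower.toAlgHom R A B))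
          (diagIdeal R A) ∧
      (∀ n : ℕ,
        Ideal.map (sigmaPow R B σB n) (diagIdeal R B) =
          Ideal.map
            (Algebra.TensorProduct.map (IsScalarTower.toAlgHom R A B)
              (IsScalarTower.toAlgHom R A B))
            (Ideal.map (sigmaPow R A σA n) (diagIdeal R A))) ∧
      (∀ n : ℕ,
        twistedPow R B σB n =
          Ideal.map
            (Algebra.TensorProduct.map (IsScalarTower.toAlgHom R A B)
              (IsScalarTower.toAlgHom R A B))
            (twistedPow R A σA n)) := by
  have hdiag := diagIdeal_eq_map_of_isLocalization (R := R) (B := B) S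
  refine ⟨hdiag, fun n => ?_, twistedPow_eq_map_of_diagIdeal_eq_map hσB hdiag⟩
  rw [hdiag, map_sigmaPow_map_self hσB]

/-- For a twisted localization `B = S⁻¹A` of `A` with localization map `φ` and
`Φ = φ ⊗ φ : P_A → P_B`: `I_B` is the extension of `I_A` along `Φ`, and for every `n`,
`σ^n(I_B)·P_B = σ^n(I_A)·P_B` and `I_B^{(n)} = I_A^{(n)}·P_B`, i.e. the twisted powers
of `I_B` are the extensions of the twisted powers of `I_A`. -/
theorem stmt5 (R A B : Type*) [CommRing R] [CommRing A] [Algebra R A]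
    [CommRing B] [Algebra R B] [Algebra A B] [IsScalarTower R A B]
    (S : Submonoid A) [IsLocalization S B]
    (σA : A →ₐ[R] A) (hS : ∀ s ∈ S, IsUnit (algebraMap A B (σA s)))
    (σB : B →ₐ[R] B)
    (hσB : σB.comp (IsScalarTower.toAlgHom R A B) =
      (IsScalarTower.toAlgHom R A B).comp σA) :
    diagIdeal R B =
        Ideal.map
          (Algebra.TensorProduct.map (IsScalarTower.toAlgHom R A B)
            (IsScalarTower.toAlgHom R A B))
          (diagIdeal R A) ∧
      (∀ n : ℕ,
        Ideal.map (sigmaPow R B σB n) (diagIdeal R B) =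
          Ideal.map
            (Algebra.TensorProduct.map (IsScalarTower.toAlgHom R A B)
              (IsScalarTower.toAlgHom R A B))
            (Ideal.map (sigmaPow R A σA n) (diagIdeal R A))) ∧
      (∀ n : ℕ,
        twistedPow R B σB n =
          Ideal.map
            (Algebra.TensorProduct.map (IsScalarTower.toAlgHom R A B)
              (IsScalarTower.toAlgHom R A B))
            (twistedPow R A σA n)) :=
  stmt5_general R A B S σA σB hσB
end

section
/- Let A be a twisted R-algebra. For every x ∈ A and every n ∈ ℕ, there exists f ∈ P_A such that f · (1 ⊗ x) ≡ (∏_{i=0}^{n} σ_A^i(x)) ⊗ 1 modulo the twisted power ideal I_A^{(n+1)}; that is, in the ring of twisted principal parts P_{A,(n)} = P_A/I_A^{(n+1)}, the class of 1 ⊗ x divides the class of (σ_A^0(x) σ_A^1(x) ⋯ σ_A^n(x)) ⊗ 1. -/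
open TensorProduct

/- Write `y = 1 ⊗ x` and `aₖ = σ_A^k(x) ⊗ 1`. Each difference `aₖ - y = σ^k(x ⊗ 1 - 1 ⊗ x)`
lies in `σ^k(I_A)`, so `aₖ ≡ y` modulo `σ^k(I_A)`. Multiplying such congruences, a product
`∏ aₖ` is congruent to a multiple of `y` modulo the product of the ideals, which is the
twisted power `I_A^{(n+1)}`. -/

theorem Ideal.exists_mul_sub_prod_mem_prod {ι S : Type*} [CommRing S]
    (y : S) (a : ι → S) (J : ι → Ideal S) (s : Finset ι) (h : ∀ k ∈ s, a k - y ∈ J k) :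
    ∃ f : S, f * y - ∏ k ∈ s, a k ∈ ∏ k ∈ s, J k := by
  classical
  induction s using Finset.induction_on with
  | empty => simp
  | insert i s hi ih =>
    obtain ⟨f, hf⟩ := ih fun k hk ↦ h k (Finset.mem_insert_of_mem hk)
    set P := ∏ k ∈ s, a k
    refine ⟨f * a i - (f * y - P), ?_⟩
    have key : (f * a i - (f * y - P)) * y - a i * P = (a i - y) * (f * y - P) := by ring
    rw [Finset.prod_insert hi, Finset.prod_insert hi, key]
    exact Ideal.mul_mem_mul (h i (Finset.mem_insert_self i s)) hf

section

variable (R A : Type*) [CommRing R] [CommRing A] [Algebra R A] (σ : A →ₐ[R] A)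

theorem twistedPow_eq_prod (n : ℕ) :
    twistedPow R A σ n = ∏ k ∈ Finset.range n, (diagIdeal R A).map (sigmaPow R A σ k) := by
  induction n with
  | zero => exact Ideal.one_eq_top.symm
  | succ n ih => rw [twistedPow, ih, Finset.prod_range_succ]

theorem sigmaPow_tmul (k : ℕ) (a b : A) :
    sigmaPow R A σ k (a ⊗ₜ[R] b) = (⇑σ)^[k] a ⊗ₜ[R] b := by
  induction k with
  | zero => rfl
  | succ k ih =>
    simp only [sigmaPow, sigmaP, AlgHom.comp_apply, ih, Algebra.TensorProduct.map_tmul,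
      AlgHom.id_apply, Function.iterate_succ_apply']

theorem tmul_one_sub_one_tmul_mem_diagIdeal (x : A) :
    x ⊗ₜ[R] (1 : A) - (1 : A) ⊗ₜ[R] x ∈ diagIdeal R A := by
  simp [diagIdeal, RingHom.mem_ker]

theorem iterate_tmul_one_sub_one_tmul_mem_map_diagIdeal (k : ℕ) (x : A) :
    (⇑σ)^[k] x ⊗ₜ[R] (1 : A) - (1 : A) ⊗ₜ[R] x ∈ (diagIdeal R A).map (sigmaPow R A σ k) := by
  have h := Ideal.mem_map_of_mem (sigmaPow R A σ k) (tmul_one_sub_one_tmul_mem_diagIdeal R A x)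
  rwa [map_sub, sigmaPow_tmul, sigmaPow_tmul, iterate_map_one] at h

end

/-- For every `x ∈ A` and `n ∈ ℕ` there exists `f ∈ P_A` with
`f · (1 ⊗ x) ≡ (∏_{i=0}^{n} σ_A^i(x)) ⊗ 1  mod I_A^{(n+1)}`; that is, in
`P_{A,(n)} = P_A/I_A^{(n+1)}` the class of `1 ⊗ x` divides the class of
`(σ_A^0(x) ⋯ σ_A^n(x)) ⊗ 1`. -/
theorem stmt8 (R A : Type*) [CommRing R] [CommRing A] [Algebra R A]
    (σA : A →ₐ[R] A) (x : A) (n : ℕ) :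
    (∃ f : A ⊗[R] A,
        f * ((1 : A) ⊗ₜ[R] x) -
            (∏ i ∈ Finset.range (n + 1), (⇑σA)^[i] x) ⊗ₜ[R] (1 : A) ∈
          twistedPow R A σA (n + 1)) ∧
      Ideal.Quotient.mk (twistedPow R A σA (n + 1)) ((1 : A) ⊗ₜ[R] x) ∣
        Ideal.Quotient.mk (twistedPow R A σA (n + 1))
          ((∏ i ∈ Finset.range (n + 1), (⇑σA)^[i] x) ⊗ₜ[R] (1 : A)) := by
  have prod_tmul_one : (∏ i ∈ Finset.range (n + 1), (⇑σA)^[i] x) ⊗ₜ[R] (1 : A) =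
      ∏ i ∈ Finset.range (n + 1), (⇑σA)^[i] x ⊗ₜ[R] (1 : A) :=
    map_prod (Algebra.TensorProduct.includeLeft : A →ₐ[R] A ⊗[R] A) _ _
  obtain ⟨f, hf⟩ := Ideal.exists_mul_sub_prod_mem_prod ((1 : A) ⊗ₜ[R] x)
    (fun i ↦ (⇑σA)^[i] x ⊗ₜ[R] (1 : A)) _ (Finset.range (n + 1))
    fun k _ ↦ iterate_tmul_one_sub_one_tmul_mem_map_diagIdeal R A σA k x
  rw [← twistedPow_eq_prod, ← prod_tmul_one] at hf
  refine ⟨⟨f, hf⟩, Ideal.Quotient.mk _ f, ?_⟩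
  rw [← map_mul, eq_comm, Ideal.Quotient.eq, mul_comm]
  exact hf
end
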